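/- arXiv:2303.01072 — 3 statements merged into one kernel-verified Lean document; each statement's English description precedes it below -/
import Mathlib

section
/- Let n ≥ 2, let g be an n×n complex matrix and let α, α' ∈ {1,…,n} with α ≠ α'. Then det(g_{¬α,¬α'}) = (−1)^{α+α'} Σ_{γ ∈ P_{α'→α}} (−1)^{|γ|+1} c(γ) · det(g_{¬γ,¬γ}), where the sum runs over all paths γ ∈ P_{α'→α}. -/
noncomputable section

open Matrix
open scoped Classical

/-- Encoding of the paths in `P_{α'→α}`: a path `γ = (r₁, …, r_s)` with
`2 ≤ s ≤ m+1` is encoded as a pair of `k : Fin m` (so that `s = k + 2`) and a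
function `r : Fin (k+2) → Fin (m+1)` listing its entries. -/
abbrev PathIdx (m : ℕ) := Σ k : Fin m, Fin (k.1 + 2) → Fin (m + 1)

/-- `γ ∈ P_{α'→α}`: the first entry is `α'`, the last is `α`, and the interior
entries are pairwise distinct and different from both endpoints. -/
def IsPath {m : ℕ} (α α' : Fin (m + 1)) (γ : PathIdx m) : Prop :=
  γ.2 0 = α' ∧ γ.2 (Fin.last (γ.1.1 + 1)) = α ∧
    ∀ i j : Fin (γ.1.1 + 2), i ≠ j → i ≠ 0 → i ≠ Fin.last (γ.1.1 + 1) →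
      γ.2 i ≠ γ.2 j

/-- The length `|γ| = s` of the path. -/
def pathLen {m : ℕ} (γ : PathIdx m) : ℕ := γ.1.1 + 2

/-- `c(γ) = g(r₁,r₂) g(r₂,r₃) ⋯ g(r_{s-1},r_s)`. -/
def pathProd {m : ℕ} (g : Matrix (Fin (m + 1)) (Fin (m + 1)) ℂ) (γ : PathIdx m) : ℂ :=
  ∏ i : Fin (γ.1.1 + 1), g (γ.2 i.castSucc) (γ.2 i.succ)

/-- `det(g_{¬γ,¬γ})`: the determinant of the matrix obtained from `g` by deleting
all rows and columns with indices among the entries of `γ` (the determinant of the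
empty matrix being `1`). -/
def pathOffDet {m : ℕ} (g : Matrix (Fin (m + 1)) (Fin (m + 1)) ℂ) (γ : PathIdx m) : ℂ :=
  (Matrix.of fun i j : {a : Fin (m + 1) // a ∉ Finset.image γ.2 Finset.univ} =>
    g i.1 j.1).det

/-!
By the cofactor formula, `det g_{¬α,¬α'}` is `(-1)^{α+α'}` times the determinant of `g` with
row `α` replaced by the unit row `e_{α'}`, and in the Leibniz expansion of the latter only the
permutations `σ` with `σ α = α'` survive. Such a `σ` splits uniquely as the cycle
`α' ↦ σ α' ↦ ⋯ ↦ α ↦ α'` through `α'`, which is a path `γ ∈ P_{α'→α}`, times a permutation `δ`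
of the indices off `γ`. The cycle contributes the sign `(-1)^{|γ|+1}` and the weight `c(γ)`, and
the sum over `δ` is `det g_{¬γ,¬γ}`.
-/

open Equiv Equiv.Perm Finset

theorem Matrix.det_submatrix_succAbove_eq_det_updateRow {R : Type*} [CommRing R] {n : ℕ}
    (A : Matrix (Fin (n + 1)) (Fin (n + 1)) R) (i j : Fin (n + 1)) :
    (A.submatrix i.succAbove j.succAbove).det =
      (-1) ^ (i + j : ℕ) * (A.updateRow i (Pi.single j 1)).det := by
  rw [← adjugate_apply, adjugate_fin_succ_eq_det_submatrix, ← mul_assoc, ← pow_add,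
    Even.neg_one_pow ⟨_, rfl⟩, one_mul]

theorem Matrix.det_updateRow_single_eq_sum_perm {R n : Type*} [CommRing R] [Fintype n]
    [DecidableEq n] (A : Matrix n n R) (i j : n) :
    (A.updateRow i (Pi.single j 1)).det =
      ∑ σ ∈ univ.filter (fun σ : Perm n => σ i = j),
        (sign σ : R) * ∏ k, A.updateRow i (Pi.single j 1) k (σ k) := by
  rw [← det_transpose, det_apply', sum_filter_of_ne]
  · rfl
  intro σ _ hσ
  contrapose! hσ
  exact mul_eq_zero_of_right _ (prod_eq_zero (mem_univ i) (by simp [hσ]))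

namespace List

variable {X : Type*} [DecidableEq X]

theorem formPerm_ofFn_apply_castSucc {n : ℕ} {f : Fin (n + 2) → X} (hf : Function.Injective f)
    (i : Fin (n + 1)) : formPerm (ofFn f) (f i.castSucc) = f i.succ := by
  have := formPerm_apply_getElem (ofFn f) (nodup_ofFn.2 hf) i (by simp)
  simp only [List.getElem_ofFn, length_ofFn,
    Nat.mod_eq_of_lt (show (i : ℕ) + 1 < n + 2 by omega)] at this
  exact this

theorem formPerm_ofFn_apply_last {n : ℕ} {f : Fin (n + 2) → X} (hf : Function.Injective f) :
    formPerm (ofFn f) (f (Fin.last _)) = f 0 := by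
  have := formPerm_apply_getElem (ofFn f) (nodup_ofFn.2 hf) (n + 1) (by simp)
  simp only [List.getElem_ofFn, length_ofFn, Nat.mod_self] at this
  exact this

theorem sign_formPerm [Fintype X] {l : List X} (hl : l.Nodup) (h2 : 2 ≤ l.length) :
    sign (formPerm l) = -(-1) ^ l.length := by
  rw [(isCycle_formPerm hl h2).sign, support_formPerm_of_nodup l hl (by rintro x rfl; simp at h2),
    toFinset_card_of_nodup hl]

end List

namespace Equiv.Perm

variable {X : Type*} [Fintype X] [DecidableEq X] {σ : Perm X} {x y : X}

theorem apply_mem_toList_iff : σ y ∈ toList σ x ↔ y ∈ toList σ x := by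
  simp only [mem_toList_iff, sameCycle_apply_right]

theorem formPerm_toList_apply_of_mem (hy : y ∈ toList σ x) : (toList σ x).formPerm y = σ y := by
  rw [formPerm_toList, (mem_toList_iff.1 hy).1.cycleOf_apply]

end Equiv.Perm

section Paths

open List

variable {m : ℕ}

-- Reducible, so that `{a // a ∉ pathSupport γ}` is the index type of the matrix in `pathOffDet`.
abbrev pathSupport (γ : PathIdx m) : Finset (Fin (m + 1)) := Finset.image γ.2 Finset.univ

theorem mem_pathSupport_iff {γ : PathIdx m} {a : Fin (m + 1)} :
    a ∈ pathSupport γ ↔ a ∈ ofFn γ.2 := by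
  simp only [mem_image, mem_univ, true_and, List.mem_ofFn]

theorem isPath_iff_injective {α α' : Fin (m + 1)} (hαα' : α ≠ α') {γ : PathIdx m} :
    IsPath α α' γ ↔ γ.2 0 = α' ∧ γ.2 (Fin.last _) = α ∧ Function.Injective γ.2 := by
  refine ⟨fun ⟨h0, hl, hd⟩ => ⟨h0, hl, fun i j hij => ?_⟩, fun ⟨h0, hl, hinj⟩ =>
    ⟨h0, hl, fun i j hij _ _ => hinj.ne hij⟩⟩
  by_contra hne
  have endpoint : ∀ {i j}, i ≠ j → γ.2 i = γ.2 j → i = 0 ∨ i = Fin.last _ := fun hij' heq => by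
    by_contra h
    push Not at h
    exact hd _ _ hij' h.1 h.2 heq
  rcases endpoint hne hij with rfl | rfl <;> rcases endpoint (Ne.symm hne) hij.symm with rfl | rfl
  all_goals first | exact hne rfl | exact hαα' (by rw [← h0, ← hl, hij])

theorem exists_pathIdx_ofFn_eq {l : List (Fin (m + 1))} (h2 : 2 ≤ l.length)
    (hl : l.length ≤ m + 1) :
    ∃ γ : PathIdx m, ofFn γ.2 = l := by
  obtain ⟨k, hk⟩ := Nat.exists_eq_add_of_le' h2
  refine ⟨⟨⟨k, by omega⟩, fun j => l[(j : ℕ)]⟩, ext_getElem (by simp [hk]) fun n _ _ => ?_⟩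
  simp only [List.getElem_ofFn]

def pathPerm (γ : PathIdx m) (δ : Perm {a // a ∉ pathSupport γ}) : Perm (Fin (m + 1)) :=
  (ofFn γ.2).formPerm * ofSubtype δ

variable {γ : PathIdx m} {δ : Perm {a // a ∉ pathSupport γ}} {a : Fin (m + 1)}

theorem pathPerm_apply_of_mem (ha : a ∈ pathSupport γ) :
    pathPerm γ δ a = (ofFn γ.2).formPerm a := by
  rw [pathPerm, Perm.mul_apply, ofSubtype_apply_of_not_mem δ (not_not.2 ha)]

theorem pathPerm_apply_of_not_mem (ha : a ∉ pathSupport γ) : pathPerm γ δ a = δ ⟨a, ha⟩ := by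
  rw [pathPerm, Perm.mul_apply, ofSubtype_apply_of_mem δ ha,
    formPerm_apply_of_notMem (mt mem_pathSupport_iff.2 (δ ⟨a, ha⟩).2)]

theorem pathPerm_apply_castSucc (hγ : Function.Injective γ.2) (i : Fin (γ.1.1 + 1)) :
    pathPerm γ δ (γ.2 i.castSucc) = γ.2 i.succ := by
  rw [pathPerm_apply_of_mem (mem_image_of_mem _ (mem_univ _)), formPerm_ofFn_apply_castSucc hγ]

theorem pathPerm_apply_last (hγ : Function.Injective γ.2) :
    pathPerm γ δ (γ.2 (Fin.last _)) = γ.2 0 := by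
  rw [pathPerm_apply_of_mem (mem_image_of_mem _ (mem_univ _)), formPerm_ofFn_apply_last hγ]

theorem sign_pathPerm (hγ : Function.Injective γ.2) :
    sign (pathPerm γ δ) = (-1) ^ (pathLen γ + 1) * sign δ := by
  rw [pathPerm, map_mul, sign_ofSubtype, sign_formPerm (nodup_ofFn.2 hγ) (by simp), length_ofFn,
    pathLen, pow_succ (-1 : ℤˣ) (_ + 2), mul_neg_one]

theorem cycleOf_pathPerm (hγ : Function.Injective γ.2) :
    (pathPerm γ δ).cycleOf (γ.2 0) = (ofFn γ.2).formPerm := by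
  have hdisj : Perm.Disjoint (ofFn γ.2).formPerm (ofSubtype δ) := by
    intro a
    by_cases ha : a ∈ pathSupport γ
    · exact Or.inr (ofSubtype_apply_of_not_mem δ (not_not.2 ha))
    · exact Or.inl (formPerm_apply_of_notMem (mt mem_pathSupport_iff.2 ha))
  rw [pathPerm, hdisj.cycleOf_mul_distrib, (cycleOf_eq_one_iff _).2
    (ofSubtype_apply_of_not_mem δ (not_not.2 (mem_image_of_mem _ (mem_univ 0)))), mul_one]
  refine (isCycle_formPerm (nodup_ofFn.2 hγ) (by simp)).cycleOf_eq ?_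
  rw [← Fin.castSucc_zero, formPerm_ofFn_apply_castSucc hγ]
  exact hγ.ne (Fin.castSucc_lt_succ (i := 0)).ne'

theorem toList_cycleOf_pathPerm (hγ : Function.Injective γ.2) :
    toList ((pathPerm γ δ).cycleOf (γ.2 0)) (γ.2 0) = ofFn γ.2 := by
  have h := toList_formPerm_nontrivial (ofFn γ.2) (by simp) (nodup_ofFn.2 hγ)
  rwa [List.get_eq_getElem, List.getElem_ofFn, ← cycleOf_pathPerm (δ := δ) hγ] at h

theorem sigma_eq_of_pathPerm_eq {α α' : Fin (m + 1)} (hαα' : α ≠ α') {γ γ' : PathIdx m}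
    (hγ : IsPath α α' γ) (hγ' : IsPath α α' γ') {δ : Perm {a // a ∉ pathSupport γ}}
    {δ' : Perm {a // a ∉ pathSupport γ'}}
    (h : pathPerm γ δ = pathPerm γ' δ') :
    (⟨γ, δ⟩ : Σ γ : PathIdx m, Perm {a // a ∉ pathSupport γ}) = ⟨γ', δ'⟩ := by
  obtain ⟨h0, -, hinj⟩ := (isPath_iff_injective hαα').1 hγ
  obtain ⟨h0', -, hinj'⟩ := (isPath_iff_injective hαα').1 hγ'
  have hl : ofFn γ.2 = ofFn γ'.2 := by
    rw [← toList_cycleOf_pathPerm (δ := δ) hinj, ← toList_cycleOf_pathPerm (δ := δ') hinj', h,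
      h0, h0']
  obtain ⟨⟨k, hk⟩, r⟩ := γ
  obtain ⟨⟨k', hk'⟩, r'⟩ := γ'
  obtain rfl : k = k' := by simpa using congrArg List.length hl
  obtain rfl : r = r' := ofFn_injective hl
  obtain rfl : δ = δ' := ofSubtype_injective (mul_left_cancel h)
  rfl

theorem exists_pathPerm_eq {α α' : Fin (m + 1)} (hαα' : α ≠ α') {σ : Perm (Fin (m + 1))}
    (hσ : σ α = α') : ∃ γ : PathIdx m, IsPath α α' γ ∧ ∃ δ, pathPerm γ δ = σ := by
  have hα' : α' ∈ σ.support := mem_support.2 fun h => hαα' (σ.injective (hσ.trans h.symm))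
  have hlen := two_le_length_toList_iff_mem_support.2 hα'
  obtain ⟨γ, hγl⟩ :=
    exists_pathIdx_ofFn_eq hlen ((nodup_toList σ α').length_le_card.trans_eq (by simp))
  have hinj : Function.Injective γ.2 := nodup_ofFn.1 (hγl ▸ nodup_toList σ α')
  have hmem : ∀ a, a ∈ pathSupport γ ↔ a ∈ toList σ α' := fun a => by
    rw [mem_pathSupport_iff, hγl]
  have hσγ : ∀ a ∈ pathSupport γ, σ a = (ofFn γ.2).formPerm a := fun a ha => by
    rw [hγl, formPerm_toList_apply_of_mem ((hmem a).1 ha)]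
  have h0 : γ.2 0 = α' := by
    simpa using (List.getElem_of_eq hγl (by simp)).trans (toList_getElem_zero σ α' hα')
  have hlast : γ.2 (Fin.last _) = α := σ.injective <| by
    rw [hσγ _ (mem_image_of_mem _ (mem_univ _)), formPerm_ofFn_apply_last hinj, h0, hσ]
  refine ⟨γ, (isPath_iff_injective hαα').2 ⟨h0, hlast, hinj⟩,
    σ.subtypePerm fun a => by rw [hmem, hmem, apply_mem_toList_iff], Equiv.ext fun a => ?_⟩
  by_cases ha : a ∈ pathSupport γ
  · rw [pathPerm_apply_of_mem ha, hσγ a ha]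
  · rw [pathPerm_apply_of_not_mem ha]
    rfl

theorem prod_updateRow_pathPerm {α α' : Fin (m + 1)} (hαα' : α ≠ α')
    (g : Matrix (Fin (m + 1)) (Fin (m + 1)) ℂ) (hγ : IsPath α α' γ) :
    ∏ k, g.updateRow α (Pi.single α' 1) k (pathPerm γ δ k) =
      pathProd g γ * ∏ a : {a // a ∉ pathSupport γ}, g a.1 (δ a).1 := by
  obtain ⟨h0, hlast, hinj⟩ := (isPath_iff_injective hαα').1 hγ
  have hα : α ∈ pathSupport γ := hlast ▸ mem_image_of_mem _ (mem_univ _)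
  rw [← prod_mul_prod_compl (pathSupport γ), prod_image fun i _ j _ h => hinj h,
    Fin.prod_univ_castSucc, pathPerm_apply_last hinj, hlast, h0, updateRow_self,
    Pi.single_eq_same, mul_one, prod_subtype (pathSupport γ)ᶜ fun a => mem_compl]
  congr 1
  · refine prod_congr rfl fun i _ => ?_
    rw [pathPerm_apply_castSucc hinj, updateRow_ne (hlast ▸ hinj.ne (Fin.castSucc_ne_last i))]
  · refine prod_congr rfl fun a _ => ?_
    rw [pathPerm_apply_of_not_mem a.2, updateRow_ne (ne_of_mem_of_not_mem hα a.2).symm]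

theorem pathOffDet_eq_sum (g : Matrix (Fin (m + 1)) (Fin (m + 1)) ℂ) (γ : PathIdx m) :
    pathOffDet g γ = ∑ δ : Perm {a // a ∉ pathSupport γ}, (sign δ : ℂ) * ∏ a, g a.1 (δ a).1 := by
  rw [pathOffDet, ← det_transpose, det_apply']
  rfl

theorem det_updateRow_single_eq_sum_paths (g : Matrix (Fin (m + 1)) (Fin (m + 1)) ℂ)
    {α α' : Fin (m + 1)} (hαα' : α ≠ α') :
    (g.updateRow α (Pi.single α' 1)).det =
      ∑ γ ∈ univ.filter (IsPath α α'), (-1) ^ (pathLen γ + 1) * pathProd g γ * pathOffDet g γ := by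
  simp_rw [det_updateRow_single_eq_sum_perm, pathOffDet_eq_sum, mul_sum]
  rw [sum_sigma']
  symm
  have hpath : ∀ p ∈ (univ.filter (IsPath α α')).sigma
      fun γ => (univ : Finset (Perm {a // a ∉ pathSupport γ})), IsPath α α' p.1 :=
    fun p hp => (Finset.mem_filter.1 (mem_sigma.1 hp).1).2
  refine sum_bij (fun p _ => pathPerm p.1 p.2) (fun p hp => ?_)
    (fun p hp p' hp' h => sigma_eq_of_pathPerm_eq hαα' (hpath p hp) (hpath p' hp') h)
    (fun σ hσ => ?_) (fun p hp => ?_)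
  · obtain ⟨h0, hlast, hinj⟩ := (isPath_iff_injective hαα').1 (hpath p hp)
    rw [Finset.mem_filter, ← hlast, pathPerm_apply_last hinj, h0]
    exact ⟨mem_univ _, rfl⟩
  · obtain ⟨γ, hγ, δ, rfl⟩ := exists_pathPerm_eq hαα' (Finset.mem_filter.1 hσ).2
    exact ⟨⟨γ, δ⟩, mem_sigma.2 ⟨Finset.mem_filter.2 ⟨mem_univ _, hγ⟩, mem_univ _⟩, rfl⟩
  · have hγ := hpath p hp
    rw [prod_updateRow_pathPerm hαα' g hγ, sign_pathPerm ((isPath_iff_injective hαα').1 hγ).2.2]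
    push_cast
    ring

end Paths

theorem statement9_general (m : ℕ) (g : Matrix (Fin (m + 1)) (Fin (m + 1)) ℂ)
    (α α' : Fin (m + 1)) (hαα' : α ≠ α') :
    (g.submatrix α.succAbove α'.succAbove).det =
      (-1 : ℂ) ^ (α.1 + α'.1) *
        ∑ γ ∈ Finset.univ.filter (fun γ : PathIdx m => IsPath α α' γ),
          (-1 : ℂ) ^ (pathLen γ + 1) * pathProd g γ * pathOffDet g γ := by
  rw [Matrix.det_submatrix_succAbove_eq_det_updateRow, det_updateRow_single_eq_sum_paths g hαα']

/-- row/column expansion of a minor along paths: for an `n×n`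
complex matrix `g` (`n = m+1 ≥ 2`) and `α ≠ α'`,
`det(g_{¬α,¬α'}) = (-1)^{α+α'} Σ_{γ ∈ P_{α'→α}} (-1)^{|γ|+1} c(γ) det(g_{¬γ,¬γ})`,
where `g_{¬α,¬α'}` is `g` with row `α` and column `α'` deleted (realized by the
strictly monotone reindexings `Fin.succAbove`). -/
theorem statement9 (m : ℕ) (hm : 1 ≤ m) (g : Matrix (Fin (m + 1)) (Fin (m + 1)) ℂ)
    (α α' : Fin (m + 1)) (hαα' : α ≠ α') :
    (g.submatrix α.succAbove α'.succAbove).det =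
      (-1 : ℂ) ^ (α.1 + α'.1) *
        ∑ γ ∈ Finset.univ.filter (fun γ : PathIdx m => IsPath α α' γ),
          (-1 : ℂ) ^ (pathLen γ + 1) * pathProd g γ * pathOffDet g γ :=
  statement9_general m g α α' hαα'
end
end

section
/- Let N ≥ 1, l ≥ 1, C > 0 and D ≥ 2. Let g be an (Nl)×(Nl) complex matrix which is block tridiagonal with respect to the decomposition into N blocks of size l: writing each index α ∈ {1,…,Nl} as α = p(α)l + q(α) with p(α) ∈ {0,…,N−1} and q(α) ∈ {1,…,l}, assume g(α,α') = 0 whenever |p(α)−p(α')| ≥ 2, |g(α,α')| ≤ C whenever |p(α)−p(α')| = 1, and |g(α,α')| ≤ CD whenever p(α) = p(α'). Then there exists a constant C' > 0 depending only on C and l such that for all α ≠ α': |det(g_{¬α,¬α'})| ≤ C'^{Nl} · D^{Nl} · D^{−|p(α)−p(α')|}, where g_{¬α,¬α'} is the matrix obtained from g by deleting row α and column α'. -/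
noncomputable section

open Matrix

/-- `det(g_{¬a,¬b})`: the determinant of the matrix obtained from `g` by deleting
row `a` and column `b`, realized via the strictly monotone enumerations of the
remaining row and column indices. -/
def minorDet {m : ℕ} (g : Matrix (Fin m) (Fin m) ℂ) (a b : Fin m) : ℂ :=
  (Matrix.of fun i j : Fin (m - 1) =>
      g ((Finset.univ.erase a).orderIsoOfFin
            (by rw [Finset.card_erase_of_mem (Finset.mem_univ a), Finset.card_univ,
              Fintype.card_fin]) i).1
        ((Finset.univ.erase b).orderIsoOfFin
            (by rw [Finset.card_erase_of_mem (Finset.mem_univ b), Finset.card_univ,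
              Fintype.card_fin]) j).1).det

/-!
Conjugate `g` by the diagonal matrix with entries `D ^ (t * p(x))`, where `t` is the sign of
`p(α') - p(α)`. Since the row and column index sets of the minor differ only in `α'` versus `α`,
this multiplies its determinant by exactly `D ^ |p(α) - p(α')|`. After rescaling, entries in the
diagonal blocks are still at most `C D` and those in adjacent blocks at most `C D^{±1} ≤ C D`,
and a column meets only three blocks, i.e. at most `3 l` nonzero entries. Bounding `|det|` by
the permanent of the absolute values, and the permanent of a nonnegative matrix by the product
of its column sums, gives `|det| D^{|p(α) - p(α')|} ≤ (3 l C D)^{N l - 1}`.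
-/

open Finset

namespace Matrix

variable {n : Type*} [Fintype n] [DecidableEq n]

theorem permanent_diagonal_mul_mul_diagonal {R : Type*} [CommSemiring R] (u v : n → R)
    (A : Matrix n n R) :
    (diagonal u * A * diagonal v).permanent = (∏ i, u i) * A.permanent * ∏ i, v i := by
  simp only [permanent, diagonal_mul, mul_diagonal, prod_mul_distrib, mul_sum, sum_mul]
  refine sum_congr rfl fun σ _ => ?_
  rw [Equiv.prod_comp σ u]

theorem permanent_le_prod_sum {R : Type*} [CommSemiring R] [PartialOrder R] [IsOrderedRing R]
    (A : Matrix n n R) (hA : ∀ i j, 0 ≤ A i j) :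
    A.permanent ≤ ∏ j, ∑ i, A i j := by
  rw [Fintype.prod_sum, permanent]
  refine (sum_map univ ⟨fun σ : Equiv.Perm n => ⇑σ, DFunLike.coe_injective⟩
    fun p : n → n => ∏ j, A (p j) j).symm.trans_le ?_
  exact sum_le_sum_of_subset_of_nonneg (subset_univ _)
    fun p _ _ => prod_nonneg fun j _ => hA _ _

theorem norm_det_le_permanent_norm {R : Type*} [NormedCommRing R] [NormOneClass R]
    (A : Matrix n n R) : ‖A.det‖ ≤ (A.map (‖·‖)).permanent := by
  rw [det_apply, permanent]
  refine (norm_sum_le _ _).trans (sum_le_sum fun σ _ => ?_)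
  rw [norm_units_zsmul]
  exact norm_prod_le _ _

theorem norm_det_mul_prod_mul_prod_le {R : Type*} [NormedCommRing R] [NormOneClass R]
    (A : Matrix n n R) {u v : n → ℝ} (hu : ∀ i, 0 ≤ u i) (hv : ∀ j, 0 ≤ v j) :
    ‖A.det‖ * (∏ i, u i) * ∏ j, v j ≤ ∏ j, ∑ i, u i * ‖A i j‖ * v j := by
  have hu' : 0 ≤ ∏ i, u i := prod_nonneg fun i _ => hu i
  have hv' : 0 ≤ ∏ j, v j := prod_nonneg fun j _ => hv j
  calc ‖A.det‖ * (∏ i, u i) * ∏ j, v j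
      ≤ (∏ i, u i) * (A.map (‖·‖)).permanent * ∏ j, v j := by
        rw [mul_comm ‖A.det‖]; gcongr; exact norm_det_le_permanent_norm A
    _ = (diagonal u * A.map (‖·‖) * diagonal v).permanent :=
        (permanent_diagonal_mul_mul_diagonal u v _).symm
    _ ≤ ∏ j, ∑ i, u i * ‖A i j‖ * v j := by
        refine (permanent_le_prod_sum _ fun i j => ?_).trans_eq ?_
        · simpa using mul_nonneg (mul_nonneg (hu i) (norm_nonneg (A i j))) (hv j)
        · simp

end Matrix

variable {m : ℕ}

theorem card_univ_erase_fin (a : Fin m) : #(univ.erase a) = m - 1 := by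
  rw [card_erase_of_mem (mem_univ a), card_univ, Fintype.card_fin]

def enumErase (a : Fin m) (i : Fin (m - 1)) : Fin m :=
  ((univ.erase a).orderIsoOfFin (card_univ_erase_fin a) i).1

theorem minorDet_eq_det_submatrix (g : Matrix (Fin m) (Fin m) ℂ) (a b : Fin m) :
    minorDet g a b = (g.submatrix (enumErase a) (enumErase b)).det :=
  rfl

@[to_additive]
theorem prod_comp_enumErase {M : Type*} [CommMonoid M] (a : Fin m) (f : Fin m → M) :
    ∏ i, f (enumErase a i) = ∏ x ∈ univ.erase a, f x := by
  rw [← prod_coe_sort (univ.erase a)]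
  exact Equiv.prod_comp ((univ.erase a).orderIsoOfFin (card_univ_erase_fin a)).toEquiv
    fun x => f x.1

/-- The block `p(x)` of the index `x`, for blocks of size `l`. -/
def blockIdx (l : ℕ) (x : Fin m) : ℤ := ((x.1 / l : ℕ) : ℤ)

structure IsBlockTridiagonal (l : ℕ) (C D : ℝ) (g : Matrix (Fin m) (Fin m) ℂ) : Prop where
  eq_zero : ∀ a b, 2 ≤ |blockIdx l a - blockIdx l b| → g a b = 0
  norm_le_of_adjacent : ∀ a b, |blockIdx l a - blockIdx l b| = 1 → ‖g a b‖ ≤ C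
  norm_le_of_same : ∀ a b : Fin m, a.1 / l = b.1 / l → ‖g a b‖ ≤ C * D

theorem card_filter_abs_blockIdx_sub_le {l : ℕ} (hl : 0 < l) (c : ℕ) :
    #{x : Fin m | |blockIdx l x - c| ≤ 1} ≤ 3 * l := by
  calc #{x : Fin m | |blockIdx l x - c| ≤ 1}
      ≤ #(Ico (l * (c - 1)) (l * (c + 2))) := by
        refine card_le_card_of_injOn Fin.val (fun x hx => ?_) Fin.val_injective.injOn
        simp only [blockIdx, coe_filter, mem_univ, true_and, Set.mem_ofPred_eq, abs_le] at hx
        obtain ⟨hlo, hhi⟩ : c - 1 ≤ x.1 / l ∧ x.1 / l < c + 2 := by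
          generalize x.1 / l = q at hx; omega
        simp only [coe_Ico, Set.mem_Ico]
        exact ⟨mul_comm l _ ▸ (Nat.le_div_iff_mul_le hl).1 hlo,
          mul_comm l _ ▸ (Nat.div_lt_iff_lt_mul hl).1 hhi⟩
    _ ≤ 3 * l := by
        rw [Nat.card_Ico, ← Nat.mul_sub]
        exact Nat.mul_le_mul_left l (by omega) |>.trans_eq (mul_comm _ _)

namespace IsBlockTridiagonal

variable {l : ℕ} {C D : ℝ} {g : Matrix (Fin m) (Fin m) ℂ}

theorem norm_mul_zpow_le (hg : IsBlockTridiagonal l C D g) (hC : 0 ≤ C) (hD : 1 ≤ D)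
    {t : ℤ} (ht : |t| ≤ 1) (x y : Fin m) :
    ‖g x y‖ * D ^ (t * (blockIdx l x - blockIdx l y)) ≤
      if |blockIdx l x - blockIdx l y| ≤ 1 then C * D else 0 := by
  split_ifs with hd
  · obtain hsame | hadj :
        blockIdx l x - blockIdx l y = 0 ∨ |blockIdx l x - blockIdx l y| = 1 := by
      rw [abs_le] at hd; rw [abs_eq zero_le_one]; omega
    · rw [hsame, mul_zero, zpow_zero, mul_one]
      exact hg.norm_le_of_same x y (Nat.cast_injective (sub_eq_zero.1 hsame))
    · have hexp : t * (blockIdx l x - blockIdx l y) ≤ 1 := by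
        refine (le_abs_self _).trans ?_
        rw [abs_mul, hadj, mul_one]; exact ht
      refine mul_le_mul (hg.norm_le_of_adjacent x y hadj) ?_ (by positivity) hC
      simpa using zpow_le_zpow_right₀ hD hexp
  · rw [hg.eq_zero x y (by omega), norm_zero, zero_mul]

theorem sum_norm_mul_zpow_le (hg : IsBlockTridiagonal l C D g) (hl : 0 < l) (hC : 0 ≤ C)
    (hD : 1 ≤ D) {t : ℤ} (ht : |t| ≤ 1) (y : Fin m) :
    ∑ x, ‖g x y‖ * D ^ (t * (blockIdx l x - blockIdx l y)) ≤ 3 * l * (C * D) := by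
  calc ∑ x, ‖g x y‖ * D ^ (t * (blockIdx l x - blockIdx l y))
      ≤ ∑ x, if |blockIdx l x - blockIdx l y| ≤ 1 then C * D else 0 :=
        sum_le_sum fun x _ => hg.norm_mul_zpow_le hC hD ht x y
    _ = #{x | |blockIdx l x - blockIdx l y| ≤ 1} * (C * D) := by
        rw [sum_ite, sum_const_zero, add_zero, sum_const, nsmul_eq_mul]
    _ ≤ 3 * l * (C * D) := by
        gcongr
        exact_mod_cast card_filter_abs_blockIdx_sub_le hl (y.1 / l)

theorem norm_minorDet_mul_pow_le (hg : IsBlockTridiagonal l C D g) (hl : 0 < l) (hC : 0 ≤ C)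
    (hD : 1 ≤ D) (a b : Fin m) :
    ‖minorDet g a b‖ * D ^ (blockIdx l a - blockIdx l b).natAbs ≤
      (3 * l * (C * D)) ^ (m - 1) := by
  set M := g.submatrix (enumErase a) (enumErase b)
  set t := Int.sign (blockIdx l b - blockIdx l a)
  have ht : |t| ≤ 1 := by
    rcases Int.sign_trichotomy (blockIdx l b - blockIdx l a) with h | h | h <;> simp [t, h]
  set φ : Fin m → ℝ := fun x => D ^ (t * blockIdx l x)
  have hφ : ∀ x, 0 < φ x := fun x => zpow_pos (by linarith) _
  have hφ_div : ∀ x y, φ x / φ y = D ^ (t * (blockIdx l x - blockIdx l y)) := fun x y => by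
    rw [mul_sub, zpow_sub₀ (by linarith)]
  have hweights : (∏ i, φ (enumErase a i)) * ∏ j, (φ (enumErase b j))⁻¹ =
      D ^ (blockIdx l a - blockIdx l b).natAbs := by
    have ha := mul_prod_erase univ φ (mem_univ a)
    have hb := mul_prod_erase univ φ (mem_univ b)
    rw [prod_inv_distrib, prod_comp_enumErase, prod_comp_enumErase, ← zpow_natCast,
      Int.natCast_natAbs, abs_sub_comm, ← Int.sign_mul_self_eq_abs, ← hφ_div]
    have hB : ∏ x ∈ univ.erase b, φ x ≠ 0 := (prod_pos fun x _ => hφ x).ne'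
    field_simp [(hφ a).ne']
    linarith
  have hcolumn : ∀ j, ∑ i, φ (enumErase a i) * ‖M i j‖ * (φ (enumErase b j))⁻¹ ≤
      3 * l * (C * D) := fun j => by
    set y := enumErase b j
    calc ∑ i, φ (enumErase a i) * ‖M i j‖ * (φ y)⁻¹
        = ∑ x ∈ univ.erase a, ‖g x y‖ * D ^ (t * (blockIdx l x - blockIdx l y)) := by
          rw [← sum_comp_enumErase]
          refine sum_congr rfl fun i _ => ?_
          rw [← hφ_div]
          simp only [M, submatrix_apply]
          ring
      _ ≤ ∑ x, ‖g x y‖ * D ^ (t * (blockIdx l x - blockIdx l y)) :=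
          sum_le_univ_sum_of_nonneg fun x => by positivity
      _ ≤ 3 * l * (C * D) := hg.sum_norm_mul_zpow_le hl hC hD ht y
  calc ‖minorDet g a b‖ * D ^ (blockIdx l a - blockIdx l b).natAbs
      = ‖M.det‖ * (∏ i, φ (enumErase a i)) * ∏ j, (φ (enumErase b j))⁻¹ := by
        rw [mul_assoc, hweights, minorDet_eq_det_submatrix]
    _ ≤ ∏ j, ∑ i, φ (enumErase a i) * ‖M i j‖ * (φ (enumErase b j))⁻¹ :=
        norm_det_mul_prod_mul_prod_le _ (fun i => (hφ _).le) fun j => (inv_pos.2 (hφ _)).le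
    _ ≤ ∏ _j : Fin (m - 1), 3 * l * (C * D) :=
        prod_le_prod (fun j _ => sum_nonneg fun i _ => by positivity) fun j _ => hcolumn j
    _ = (3 * l * (C * D)) ^ (m - 1) := by simp

end IsBlockTridiagonal

/-- upper bound for the minors of a block tridiagonal matrix.
Indices `α ∈ {1, …, Nl}` are identified with `Fin (N*l)`, the site coordinate
being `p(α) = α / l`. There is `C' > 0` depending only on `C` and `l` such that
for every `N ≥ 1`, `D ≥ 2` and every block tridiagonal `g` with blocks of size
`≤ C` off the diagonal blocks and `≤ CD` on the diagonal blocks, the minors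
satisfy `|det(g_{¬α,¬α'})| ≤ C'^{Nl} D^{Nl} D^{-|p(α)-p(α')|}`. -/
theorem statement10 (l : ℕ) (hl : 1 ≤ l) (C : ℝ) (hC : 0 < C) :
    ∃ C' : ℝ, 0 < C' ∧
      ∀ N : ℕ, 1 ≤ N → ∀ D : ℝ, 2 ≤ D →
        ∀ g : Matrix (Fin (N * l)) (Fin (N * l)) ℂ,
          (∀ a b : Fin (N * l),
            2 ≤ |((a.1 / l : ℕ) : ℤ) - ((b.1 / l : ℕ) : ℤ)| → g a b = 0) →
          (∀ a b : Fin (N * l),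
            |((a.1 / l : ℕ) : ℤ) - ((b.1 / l : ℕ) : ℤ)| = 1 →
              ‖g a b‖ ≤ C) →
          (∀ a b : Fin (N * l), a.1 / l = b.1 / l → ‖g a b‖ ≤ C * D) →
          ∀ a b : Fin (N * l), a ≠ b →
            ‖minorDet g a b‖ ≤
              C' ^ (N * l) * D ^ (N * l) *
                (D ^ (((a.1 / l : ℕ) : ℤ) - ((b.1 / l : ℕ) : ℤ)).natAbs)⁻¹ := by
  refine ⟨3 * l * C + 1, by positivity, fun N _ D hD g hfar hnear hdiag a b _ => ?_⟩
  have hg : IsBlockTridiagonal l C D g := ⟨hfar, hnear, hdiag⟩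
  have hC' : 1 ≤ (3 * l * C + 1) * D :=
    one_le_mul_of_one_le_of_one_le (by nlinarith) (by linarith)
  rw [← div_eq_mul_inv, le_div_iff₀ (by positivity), ← mul_pow]
  calc ‖minorDet g a b‖ * D ^ (((a.1 / l : ℕ) : ℤ) - ((b.1 / l : ℕ) : ℤ)).natAbs
      ≤ (3 * l * (C * D)) ^ (N * l - 1) := hg.norm_minorDet_mul_pow_le hl hC.le (by linarith) a b
    _ ≤ ((3 * l * C + 1) * D) ^ (N * l - 1) := pow_le_pow_left₀ (by positivity) (by nlinarith) _
    _ ≤ ((3 * l * C + 1) * D) ^ (N * l) := pow_le_pow_right₀ hC' (Nat.sub_le _ _)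
end
end

section
/- Let l ≥ 1 and let F(x), M(x) be l×l matrices whose entries are real analytic 2π-periodic functions of x ∈ ℝ admitting holomorphic extensions to the strip {z = x + iy : |y| ≤ ρ} for some ρ > 0. Assume that for every t ∈ ℝ the function x ↦ det[(F(x) − tI)M(x)] is not identically zero. Then for every C₂ > 0 and every 0 < δ < ρ there exists ε₁ = ε₁(δ) > 0 such that for every μ ∈ ℝ with |μ| ≤ C₂ there exists y with δ/2 ≤ |y| ≤ 2δ such that inf_{x ∈ ℝ} |det[(F(x + iy) − μI)M(x + iy)]| ≥ ε₁. -/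
/-!
For fixed `μ`, `g_μ(z) = det[(F(z) - μ I) M(z)]` is holomorphic on the open strip and nonzero at
some real point, so it has only finitely many zeros in the compact rectangle
`[0, 2π] × [δ/2, δ]`; some horizontal segment at a height `y ∈ [δ/2, δ]` avoids them, and `|g_μ|`
has a positive minimum on it. Since `g` is jointly continuous in `(μ, x)`, that height keeps half
of this bound for all nearby `μ`, and compactness of `[-C₂, C₂]` makes the bound uniform. Finally,
`g_μ` is `2π`-periodic on the whole strip (the identity theorem propagates periodicity from the
real axis), so a bound on `[0, 2π]` is a bound on all of `ℝ`.
-/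

open Complex Filter Matrix Real Set Topology

section Analytic

variable {𝕜 : Type*} [NontriviallyNormedField 𝕜] {m n p : Type*} [Fintype n] {s : Set 𝕜}

theorem AnalyticOnNhd.matrix_mul_apply {A : 𝕜 → Matrix m n 𝕜} {B : 𝕜 → Matrix n p 𝕜}
    (hA : ∀ i j, AnalyticOnNhd 𝕜 (fun z => A z i j) s)
    (hB : ∀ i j, AnalyticOnNhd 𝕜 (fun z => B z i j) s) (i : m) (j : p) :
    AnalyticOnNhd 𝕜 (fun z => (A z * B z) i j) s := by
  simp only [Matrix.mul_apply]
  exact Finset.analyticOnNhd_fun_sum _ fun k _ => (hA i k).mul (hB k j)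

theorem AnalyticOnNhd.matrix_det [DecidableEq n] {A : 𝕜 → Matrix n n 𝕜}
    (hA : ∀ i j, AnalyticOnNhd 𝕜 (fun z => A z i j) s) :
    AnalyticOnNhd 𝕜 (fun z => (A z).det) s := by
  simp only [Matrix.det_apply']
  exact Finset.analyticOnNhd_fun_sum _ fun σ _ =>
    analyticOnNhd_const.mul (Finset.analyticOnNhd_fun_prod _ fun i _ => hA _ _)

theorem AnalyticOnNhd.finite_inter_preimage_zero {E : Type*} [NormedAddCommGroup E]
    [NormedSpace 𝕜 E] {f : 𝕜 → E} {U K : Set 𝕜} (hf : AnalyticOnNhd 𝕜 f U)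
    (hU : IsPreconnected U) (hne : ∃ z ∈ U, f z ≠ 0) (hK : IsCompact K) (hKU : K ⊆ U) :
    (K ∩ f ⁻¹' {0}).Finite := by
  obtain ⟨z, hz, hfz⟩ := hne
  have hcod : {z | f z ≠ 0} ∈ codiscreteWithin U :=
    (hf.eqOn_zero_or_eventually_ne_zero_of_preconnected hU).resolve_left fun h => hfz (h hz)
  convert hK.finite_sdiff_of_mem_codiscreteWithin (codiscreteWithin_mono hKU hcod) using 1
  ext; simp

end Analytic

section Strip

variable {E : Type*} [NormedAddCommGroup E] [NormedSpace ℂ E] {a b : ℝ}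

theorem isPreconnected_im_preimage_Ioo : IsPreconnected (im ⁻¹' Ioo a b) :=
  ((convex_Ioo a b).linear_preimage imLm).isPreconnected

theorem AnalyticOnNhd.periodic_of_forall_ofReal {f : ℂ → E} {p : ℝ} (ha : a < 0) (hb : 0 < b)
    (hf : AnalyticOnNhd ℂ f (im ⁻¹' Ioo a b)) (hper : ∀ x : ℝ, f (x + p) = f x) :
    ∀ z ∈ im ⁻¹' Ioo a b, f (z + p) = f z := by
  have hshift : AnalyticOnNhd ℂ (fun z => f (z + p)) (im ⁻¹' Ioo a b) := fun z hz =>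
    (hf (z + p) (by simpa using hz)).comp_of_eq (analyticAt_id.add analyticAt_const) rfl
  have hreal : Tendsto ((↑) : ℝ → ℂ) (𝓝[≠] 0) (𝓝[≠] ((0 : ℝ) : ℂ)) :=
    continuous_ofReal.continuousWithinAt.tendsto_nhdsWithin fun _ _ => by simp_all
  refine hshift.eqOn_of_preconnected_of_frequently_eq hf isPreconnected_im_preimage_Ioo
    (z₀ := ((0 : ℝ) : ℂ)) (by simpa using ⟨ha, hb⟩) ?_
  simpa using hreal.frequently (p := fun z => f (z + p) = f z)
    (Eventually.of_forall hper).frequently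

theorem AnalyticOnNhd.exists_im_forall_ne_zero {f : ℂ → E}
    (hf : AnalyticOnNhd ℂ f (im ⁻¹' Ioo a b)) (hne : ∃ z ∈ im ⁻¹' Ioo a b, f z ≠ 0)
    {y₁ y₂ : ℝ} (hy : y₁ < y₂) (hsub : Icc y₁ y₂ ⊆ Ioo a b) (c d : ℝ) :
    ∃ y ∈ Icc y₁ y₂, ∀ x ∈ Icc c d, f (x + y * I) ≠ 0 := by
  have hzeros := hf.finite_inter_preimage_zero isPreconnected_im_preimage_Ioo hne
    ((isCompact_Icc (a := c) (b := d)).reProdIm isCompact_Icc) fun z hz => hsub hz.2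
  obtain ⟨y, hy, hyz⟩ := ((Icc_infinite hy).sdiff (hzeros.image im)).nonempty
  refine ⟨y, hy, fun x hx hfx => hyz ⟨x + y * I, ⟨?_, hfx⟩, by simp⟩⟩
  simpa [mem_reProdIm] using ⟨hx, hy⟩

end Strip

theorem IsCompact.exists_pos_forall_exists_le {ι X Y : Type*} [TopologicalSpace X]
    [TopologicalSpace Y] {K : Set X} {L : Set Y} {I : Set ι} {Φ : ι → X → Y → ℝ}
    (hK : IsCompact K) (hL : IsCompact L) (hΦ : ∀ i ∈ I, Continuous (Function.uncurry (Φ i)))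
    (hpos : ∀ μ ∈ K, ∃ i ∈ I, ∀ x ∈ L, 0 < Φ i μ x) :
    ∃ ε > 0, ∀ μ ∈ K, ∃ i ∈ I, ∀ x ∈ L, ε ≤ Φ i μ x := by
  refine hK.induction_on (p := fun s => ∃ ε > 0, ∀ μ ∈ s, ∃ i ∈ I, ∀ x ∈ L, ε ≤ Φ i μ x)
    ⟨1, one_pos, by simp⟩ (fun s t hst ⟨ε, hε, ht⟩ => ⟨ε, hε, fun μ hμ => ht μ (hst hμ)⟩)
    (fun s t ⟨ε, hε, hs⟩ ⟨ε', hε', ht⟩ => ⟨min ε ε', lt_min hε hε', ?_⟩) fun μ₀ hμ₀ => ?_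
  · rintro μ (hμ | hμ)
    · obtain ⟨i, hi, h⟩ := hs μ hμ
      exact ⟨i, hi, fun x hx => (min_le_left _ _).trans (h x hx)⟩
    · obtain ⟨i, hi, h⟩ := ht μ hμ
      exact ⟨i, hi, fun x hx => (min_le_right _ _).trans (h x hx)⟩
  obtain ⟨i, hi, hμ₀⟩ := hpos μ₀ hμ₀
  have hcont := hΦ i hi
  obtain ⟨ε, hε, hbound⟩ :=
    hL.exists_forall_le' (hcont.comp (Continuous.prodMk_right μ₀)).continuousOn hμ₀
  have hnear : ∀ᶠ μ in 𝓝 μ₀, ∀ x ∈ L, ε / 2 < Φ i μ x :=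
    hL.eventually_forall_of_forall_eventually fun x hx =>
      (hcont.tendsto (μ₀, x)).eventually_const_lt ((half_lt_self hε).trans_le (hbound x hx))
  exact ⟨_, mem_nhdsWithin_of_mem_nhds hnear, ε / 2, half_pos hε,
    fun μ hμ => ⟨i, hi, fun x hx => (hμ x hx).le⟩⟩

section PencilDet

variable {n : Type*} [Fintype n] [DecidableEq n]

def pencilDet (Fc Mc : ℂ → Matrix n n ℂ) (μ : ℝ) (z : ℂ) : ℂ :=
  ((Fc z - (μ : ℂ) • (1 : Matrix n n ℂ)) * Mc z).det

variable {Fc Mc : ℂ → Matrix n n ℂ}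

theorem analyticOnNhd_pencilDet {s : Set ℂ} (hF : ∀ i j, AnalyticOnNhd ℂ (fun z => Fc z i j) s)
    (hM : ∀ i j, AnalyticOnNhd ℂ (fun z => Mc z i j) s) (μ : ℝ) :
    AnalyticOnNhd ℂ (pencilDet Fc Mc μ) s := by
  refine AnalyticOnNhd.matrix_det (AnalyticOnNhd.matrix_mul_apply (fun i j z hz => ?_) hM)
  simpa only [Matrix.sub_apply] using (hF i j z hz).fun_sub analyticAt_const

theorem continuous_pencilDet_horizontal {s : Set ℂ}
    (hF : ∀ i j, ContinuousOn (fun z => Fc z i j) s)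
    (hM : ∀ i j, ContinuousOn (fun z => Mc z i j) s) {y : ℝ} (hy : ∀ x : ℝ, x + y * I ∈ s) :
    Continuous (Function.uncurry fun μ (x : ℝ) => pencilDet Fc Mc μ (x + y * I)) := by
  have hF' : Continuous fun p : ℝ × ℝ => Fc (p.2 + y * I) :=
    continuous_pi fun i => continuous_pi fun j =>
      ((hF i j).comp_continuous (by fun_prop) hy).comp continuous_snd
  have hM' : Continuous fun p : ℝ × ℝ => Mc (p.2 + y * I) :=
    continuous_pi fun i => continuous_pi fun j =>
      ((hM i j).comp_continuous (by fun_prop) hy).comp continuous_snd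
  exact ((hF'.sub ((continuous_ofReal.comp continuous_fst).smul continuous_const)).mul
    hM').matrix_det

theorem pencilDet_ofReal {F M : ℝ → Matrix n n ℝ}
    (hF : ∀ x : ℝ, Fc x = (F x).map (↑)) (hM : ∀ x : ℝ, Mc x = (M x).map (↑)) (μ x : ℝ) :
    pencilDet Fc Mc μ x = ((F x - μ • (1 : Matrix n n ℝ)) * M x).det := by
  rw [pencilDet, hF, hM]
  refine Eq.trans ?_ (ofRealHom.map_det _).symm
  congr 1
  ext i j
  simp [Matrix.mul_apply, Matrix.one_apply, apply_ite ((↑) : ℝ → ℂ)]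

theorem periodic_pencilDet_horizontal {F M : ℝ → Matrix n n ℝ} {a b p μ y : ℝ} (ha : a < 0)
    (hb : 0 < b) (han : AnalyticOnNhd ℂ (pencilDet Fc Mc μ) (im ⁻¹' Ioo a b))
    (hF : ∀ x : ℝ, Fc x = (F x).map (↑)) (hM : ∀ x : ℝ, Mc x = (M x).map (↑))
    (hFp : Function.Periodic F p) (hMp : Function.Periodic M p) (hy : y ∈ Ioo a b) :
    Function.Periodic (fun x : ℝ => pencilDet Fc Mc μ (x + y * I)) p := by
  have hstrip := han.periodic_of_forall_ofReal ha hb fun x => by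
    rw [← ofReal_add, pencilDet_ofReal hF hM, pencilDet_ofReal hF hM, hFp, hMp]
  intro x
  dsimp only
  rw [show ((x + p : ℝ) : ℂ) + y * I = x + y * I + p by push_cast; ring]
  exact hstrip _ (by simpa using hy)

end PencilDet

theorem Function.Periodic.forall_of_forall_mem_Ico {α : Type*} {f : ℝ → α} {c : ℝ}
    (hf : Function.Periodic f c) (hc : 0 < c) {P : α → Prop} (h : ∀ x ∈ Ico 0 c, P (f x))
    (x : ℝ) : P (f x) := by
  obtain ⟨x', hx', hxx'⟩ := hf.exists_mem_Ico₀ hc x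
  exact hxx' ▸ h x' hx'

theorem statement12_general (l : ℕ) (ρ : ℝ)
    (F M : ℝ → Matrix (Fin l) (Fin l) ℝ)
    (Fc Mc : ℂ → Matrix (Fin l) (Fin l) ℂ)
    (hFper : ∀ i j, Function.Periodic (fun x => F x i j) (2 * π))
    (hMper : ∀ i j, Function.Periodic (fun x => M x i j) (2 * π))
    (hFhol : ∀ i j, DifferentiableOn ℂ (fun z => Fc z i j) {z : ℂ | |z.im| ≤ ρ})
    (hMhol : ∀ i j, DifferentiableOn ℂ (fun z => Mc z i j) {z : ℂ | |z.im| ≤ ρ})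
    (hFext : ∀ x : ℝ, Fc (x : ℂ) = (F x).map (fun a => (a : ℂ)))
    (hMext : ∀ x : ℝ, Mc (x : ℂ) = (M x).map (fun a => (a : ℂ)))
    (hnz : ∀ t : ℝ, ∃ x : ℝ,
      ((F x - t • (1 : Matrix (Fin l) (Fin l) ℝ)) * M x).det ≠ 0) :
    ∀ C₂ : ℝ, 0 < C₂ → ∀ δ : ℝ, 0 < δ → δ < ρ →
      ∃ ε₁ : ℝ, 0 < ε₁ ∧ ∀ μ : ℝ, |μ| ≤ C₂ →
        ∃ y : ℝ, δ / 2 ≤ |y| ∧ |y| ≤ 2 * δ ∧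
          ∀ x : ℝ, ε₁ ≤
            ‖((Fc ((x : ℂ) + (y : ℂ) * Complex.I) -
                  (μ : ℂ) • (1 : Matrix (Fin l) (Fin l) ℂ)) *
                Mc ((x : ℂ) + (y : ℂ) * Complex.I)).det‖ := by
  intro C₂ _ δ hδ hδρ
  have hyρ : ∀ y ∈ Icc (δ / 2) δ, y ∈ Ioo (-ρ) ρ := fun y hy =>
    ⟨by linarith [hy.1], by linarith [hy.2]⟩
  have hsub : im ⁻¹' Ioo (-ρ) ρ ⊆ {z : ℂ | |z.im| ≤ ρ} := fun z hz => (abs_lt.2 hz).le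
  have hopen : IsOpen (im ⁻¹' Ioo (-ρ) ρ) := isOpen_Ioo.preimage continuous_im
  have han : ∀ μ, AnalyticOnNhd ℂ (pencilDet Fc Mc μ) (im ⁻¹' Ioo (-ρ) ρ) :=
    analyticOnNhd_pencilDet (fun i j => ((hFhol i j).mono hsub).analyticOnNhd hopen)
      (fun i j => ((hMhol i j).mono hsub).analyticOnNhd hopen)
  have hline : ∀ μ : ℝ, ∃ y ∈ Icc (δ / 2) δ, ∀ x ∈ Icc 0 (2 * π),
      0 < ‖pencilDet Fc Mc μ (x + y * I)‖ := fun μ => by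
    obtain ⟨x, hx⟩ := hnz μ
    obtain ⟨y, hy, h⟩ := (han μ).exists_im_forall_ne_zero
      ⟨x, by simpa using hδ.trans hδρ, by rwa [pencilDet_ofReal hFext hMext, ofReal_ne_zero]⟩
      (by linarith) hyρ 0 (2 * π)
    exact ⟨y, hy, fun x hx => norm_pos_iff.2 (h x hx)⟩
  obtain ⟨ε, hε, hbound⟩ := (isCompact_Icc (a := -C₂) (b := C₂)).exists_pos_forall_exists_le
    isCompact_Icc (fun y hy => (continuous_pencilDet_horizontal
      (fun i j => (hFhol i j).continuousOn) (fun i j => (hMhol i j).continuousOn)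
      fun x => hsub (by simpa using hyρ y hy)).norm) fun μ _ => hline μ
  refine ⟨ε, hε, fun μ hμ => ?_⟩
  obtain ⟨y, hy, hyx⟩ := hbound μ (abs_le.1 hμ)
  have hy_abs : |y| = y := abs_of_pos (by linarith [hy.1])
  refine ⟨y, hy_abs.symm ▸ hy.1, hy_abs.symm ▸ by linarith [hy.2], ?_⟩
  have hper := periodic_pencilDet_horizontal (by linarith) (by linarith) (han μ) hFext hMext
    (fun x => funext fun i => funext fun j => hFper i j x)
    (fun x => funext fun i => funext fun j => hMper i j x) (hyρ y hy)
  exact hper.forall_of_forall_mem_Ico two_pi_pos (P := (ε ≤ ‖·‖))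
    (fun x hx => hyx x (Ico_subset_Icc_self hx))

/-- let `F(x), M(x)` be `l×l` matrices whose entries are real
analytic `2π`-periodic functions of `x ∈ ℝ` admitting holomorphic extensions
`Fc, Mc` to the strip `{|Im z| ≤ ρ}`. If for every `t ∈ ℝ` the function
`x ↦ det[(F(x) - tI)M(x)]` is not identically zero, then for every `C₂ > 0` and
every `0 < δ < ρ` there is `ε₁ = ε₁(δ) > 0` such that for every `μ ∈ ℝ` with
`|μ| ≤ C₂` there is `y` with `δ/2 ≤ |y| ≤ 2δ` and
`inf_{x ∈ ℝ} |det[(Fc(x+iy) - μI) Mc(x+iy)]| ≥ ε₁`. -/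
theorem statement12 (l : ℕ) (hl : 1 ≤ l) (ρ : ℝ) (hρ : 0 < ρ)
    (F M : ℝ → Matrix (Fin l) (Fin l) ℝ)
    (Fc Mc : ℂ → Matrix (Fin l) (Fin l) ℂ)
    (hFanal : ∀ i j, ∀ x : ℝ, AnalyticAt ℝ (fun x => F x i j) x)
    (hManal : ∀ i j, ∀ x : ℝ, AnalyticAt ℝ (fun x => M x i j) x)
    (hFper : ∀ i j, Function.Periodic (fun x => F x i j) (2 * π))
    (hMper : ∀ i j, Function.Periodic (fun x => M x i j) (2 * π))
    (hFhol : ∀ i j, DifferentiableOn ℂ (fun z => Fc z i j) {z : ℂ | |z.im| ≤ ρ})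
    (hMhol : ∀ i j, DifferentiableOn ℂ (fun z => Mc z i j) {z : ℂ | |z.im| ≤ ρ})
    (hFext : ∀ x : ℝ, Fc (x : ℂ) = (F x).map (fun a => (a : ℂ)))
    (hMext : ∀ x : ℝ, Mc (x : ℂ) = (M x).map (fun a => (a : ℂ)))
    (hnz : ∀ t : ℝ, ∃ x : ℝ,
      ((F x - t • (1 : Matrix (Fin l) (Fin l) ℝ)) * M x).det ≠ 0) :
    ∀ C₂ : ℝ, 0 < C₂ → ∀ δ : ℝ, 0 < δ → δ < ρ →
      ∃ ε₁ : ℝ, 0 < ε₁ ∧ ∀ μ : ℝ, |μ| ≤ C₂ →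
        ∃ y : ℝ, δ / 2 ≤ |y| ∧ |y| ≤ 2 * δ ∧
          ∀ x : ℝ, ε₁ ≤
            ‖((Fc ((x : ℂ) + (y : ℂ) * Complex.I) -
                  (μ : ℂ) • (1 : Matrix (Fin l) (Fin l) ℂ)) *
                Mc ((x : ℂ) + (y : ℂ) * Complex.I)).det‖ :=
  statement12_general l ρ F M Fc Mc hFper hMper hFhol hMhol hFext hMext hnz
end
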